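/- arXiv:1907.09746 — 6 statements merged into one kernel-verified Lean document; each statement's English description precedes it below -/
import Mathlib

section
/- For all n, k ∈ ℕ, ∫₀^∞ φ_n(x) φ_k(x) dx = (1/2) δ_{n,k}, and the family {√2 · φ_k : k ∈ ℕ} is a complete orthonormal system (Hilbert basis) of L²((0,∞)). -/
/-!
Expanding `φ_n(x) = ∑ᵢ C(n,i) (-2)ⁱ/i! · xⁱ e^{-x}`, the integral of `φ_n` against `xʲ e^{-x}`
is `j!/2^{j+1}` times `∑ᵢ (-1)ⁱ C(n,i) C(i+j,j) = (-1)ⁿ C(j,n)`, an `n`-th forward difference.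
So `φ_n` is orthogonal to `xʲ e^{-x}` for `j < n`, and orthogonality follows from the
triangular expansion of `φ_k`.

For completeness, a function `F ∈ L²(0,∞)` orthogonal to every `φ_n` is orthogonal to every
`xᵐ e^{-x}`. Integrating `e^{-cx} = e^{-bx} ∑ₘ ((b-c)x)ᵐ/m!` termwise, which is dominated by
`e^{-(b-|b-c|)x}`, moves this from `b` to every `c ∈ (0, 2b)`, hence to every `c > 0`. So
`∫ p(e^{-x}) e^{-x} F = 0` for all polynomials `p`, by Weierstrass for all continuous functions
of `e^{-x}`, and these include all compactly supported test functions: `e^{-x} F = 0` a.e.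
-/

open MeasureTheory Set

/-- The Laguerre polynomial `L_n(x) = ∑_{k=0}^n C(n, n-k) (-x)^k / k!`. -/
noncomputable def lagL (n : ℕ) (x : ℝ) : ℝ :=
  ∑ k ∈ Finset.range (n + 1), (n.choose (n - k) : ℝ) * (-x) ^ k / (Nat.factorial k : ℝ)

/-- The Laguerre function `φ_n(x) = e^{-x} L_n(2x)`. -/
noncomputable def lagPhi (n : ℕ) (x : ℝ) : ℝ := Real.exp (-x) * lagL n (2 * x)

open Finset Nat Polynomial
open scoped RealInnerProductSpace

theorem Int.alternating_sum_range_choose_mul_eq_fwdDiff_iter (f : ℕ → ℤ) (n : ℕ) :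
    ∑ i ∈ Finset.range (n + 1), (-1 : ℤ) ^ i * n.choose i * f i
      = (-1) ^ n * (fwdDiff 1)^[n] f 0 := by
  rw [fwdDiff_iter_eq_sum_shift, mul_sum]
  refine sum_congr rfl fun i hi => ?_
  obtain ⟨d, rfl⟩ := Nat.exists_eq_add_of_le (Nat.lt_succ_iff.mp (mem_range.mp hi))
  simp only [smul_eq_mul, zero_add, mul_one, Nat.add_sub_cancel_left, pow_add]
  ring_nf
  rw [(even_two.mul_left d).neg_one_pow, mul_one]

theorem Int.alternating_sum_range_choose_mul_choose (n m : ℕ) :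
    ∑ i ∈ Finset.range (n + 1), (-1 : ℤ) ^ i * n.choose i * i.choose m
      = if n = m then (-1) ^ n else 0 := by
  rw [Int.alternating_sum_range_choose_mul_eq_fwdDiff_iter, fwdDiff_iter_choose_zero]
  split_ifs <;> simp

theorem Nat.add_choose_eq_sum_choose_mul_choose (i j : ℕ) :
    (i + j).choose j = ∑ l ∈ Finset.range (j + 1), j.choose l * i.choose l := by
  rw [Nat.add_choose_eq, Nat.sum_antidiagonal_eq_sum_range_succ_mk]
  refine sum_congr rfl fun l hl => ?_
  rw [mul_comm, Nat.choose_symm (Nat.lt_succ_iff.mp (mem_range.mp hl))]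

theorem Int.alternating_sum_range_choose_mul_add_choose (n j : ℕ) :
    ∑ i ∈ Finset.range (n + 1), (-1 : ℤ) ^ i * n.choose i * (i + j).choose j
      = (-1) ^ n * j.choose n := by
  calc ∑ i ∈ Finset.range (n + 1), (-1 : ℤ) ^ i * n.choose i * (i + j).choose j
      = ∑ l ∈ Finset.range (j + 1), (j.choose l : ℤ) *
          ∑ i ∈ Finset.range (n + 1), (-1 : ℤ) ^ i * n.choose i * i.choose l := by
        simp_rw [Nat.add_choose_eq_sum_choose_mul_choose, Nat.cast_sum, mul_sum]
        rw [sum_comm]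
        push_cast
        exact sum_congr rfl fun _ _ => sum_congr rfl fun _ _ => by ring
    _ = (-1) ^ n * j.choose n := by
        simp_rw [Int.alternating_sum_range_choose_mul_choose, mul_ite, mul_zero, sum_ite_eq,
          Finset.mem_range]
        split_ifs with h
        · ring
        · rw [Nat.choose_eq_zero_of_lt (by omega)]; simp

noncomputable def powMulExp (c : ℝ) (k : ℕ) (x : ℝ) : ℝ := x ^ k * Real.exp (-(c * x))

local notation "μ₊" => volume.restrict (Ioi (0 : ℝ))

theorem continuous_powMulExp (c : ℝ) (k : ℕ) : Continuous (powMulExp c k) := by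
  unfold powMulExp; fun_prop

theorem powMulExp_mul_powMulExp (c d : ℝ) (i j : ℕ) (x : ℝ) :
    powMulExp c i x * powMulExp d j x = powMulExp (c + d) (i + j) x := by
  simp only [powMulExp, pow_add, add_mul, neg_add, Real.exp_add]
  ring

theorem integrableOn_powMulExp {c : ℝ} (hc : 0 < c) (k : ℕ) :
    IntegrableOn (powMulExp c k) (Ioi 0) := by
  refine (integrableOn_rpow_mul_exp_neg_mul_rpow (p := 1) (s := k)
    (by linarith [(k.cast_nonneg : (0 : ℝ) ≤ k)]) one_pos hc).congr_fun (fun x _ => ?_)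
    measurableSet_Ioi
  simp [powMulExp]

theorem integral_powMulExp {c : ℝ} (hc : 0 < c) (k : ℕ) :
    ∫ x in Ioi 0, powMulExp c k x = k ! / c ^ (k + 1) := by
  have h := Real.integral_rpow_mul_exp_neg_mul_Ioi (a := k + 1) (by positivity) hc
  rw [add_sub_cancel_right, Real.Gamma_nat_eq_factorial, ← Nat.cast_add_one] at h
  simp only [Real.rpow_natCast] at h
  simp only [powMulExp, h, one_div_pow]
  ring

theorem memLp_powMulExp {c : ℝ} (hc : 0 < c) (k : ℕ) : MemLp (powMulExp c k) 2 μ₊ := by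
  rw [memLp_two_iff_integrable_sq (continuous_powMulExp c k).aestronglyMeasurable]
  simp only [sq, powMulExp_mul_powMulExp]
  exact integrableOn_powMulExp (by linarith) _

theorem integrable_powMulExp_mul {c : ℝ} (hc : 0 < c) (k : ℕ) {g : ℝ → ℝ}
    (hg : MemLp g 2 μ₊) :
    Integrable (fun x => powMulExp c k x * g x) μ₊ :=
  memLp_one_iff_integrable.mp (hg.smul (memLp_powMulExp hc k))

theorem hasSum_powMulExp (b c : ℝ) (k : ℕ) (x : ℝ) :
    HasSum (fun m => (b - c) ^ m / m ! * powMulExp b (k + m) x) (powMulExp c k x) := by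
  have hterm : ∀ m : ℕ, (b - c) ^ m / m ! * powMulExp b (k + m) x
      = ((b - c) * x) ^ m / m ! * powMulExp b k x := fun m => by
    simp only [powMulExp, pow_add, mul_pow]
    ring
  have hsum : powMulExp c k x = Real.exp ((b - c) * x) * powMulExp b k x := by
    simp only [powMulExp]
    rw [mul_left_comm, ← Real.exp_add]
    ring_nf
  rw [funext hterm, hsum, Real.exp_eq_exp_ℝ]
  exact (NormedSpace.expSeries_div_hasSum_exp ((b - c) * x)).mul_right _

noncomputable def lagCoeff (n i : ℕ) : ℝ := n.choose i * (-2) ^ i / i !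

theorem lagPhi_eq_sum (n : ℕ) (x : ℝ) :
    lagPhi n x = ∑ i ∈ range (n + 1), lagCoeff n i * powMulExp 1 i x := by
  simp only [lagPhi, lagL, lagCoeff, powMulExp, one_mul, mul_sum]
  refine sum_congr rfl fun i hi => ?_
  rw [Nat.choose_symm (Nat.lt_succ_iff.mp (mem_range.mp hi)), show -(2 * x) = -2 * x by ring,
    mul_pow]
  ring

theorem memLp_lagPhi (n : ℕ) : MemLp (lagPhi n) 2 μ₊ := by
  simp_rw [funext (lagPhi_eq_sum n)]
  exact memLp_finsetSum _ fun i _ => (memLp_powMulExp one_pos i).const_mul _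

theorem integral_powMulExp_mul_lagPhi (j n : ℕ) :
    ∫ x in Ioi 0, powMulExp 1 j x * lagPhi n x = (-1) ^ n * j.choose n * j ! / 2 ^ (j + 1) := by
  calc ∫ x in Ioi 0, powMulExp 1 j x * lagPhi n x
      = ∫ x in Ioi 0, ∑ i ∈ range (n + 1), lagCoeff n i * powMulExp 2 (i + j) x := by
        simp_rw [lagPhi_eq_sum, mul_sum, mul_left_comm (powMulExp 1 j _),
          powMulExp_mul_powMulExp, add_comm j]
        norm_num
    _ = ∑ i ∈ range (n + 1), lagCoeff n i * ((i + j) ! / 2 ^ (i + j + 1)) := by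
        rw [integral_finsetSum _ fun i _ => (integrableOn_powMulExp two_pos _).const_mul _]
        simp_rw [integral_const_mul, integral_powMulExp two_pos]
    _ = j ! / 2 ^ (j + 1) * ((∑ i ∈ range (n + 1),
          (-1 : ℤ) ^ i * n.choose i * (i + j).choose j : ℤ) : ℝ) := by
        push_cast
        rw [mul_sum]
        refine sum_congr rfl fun i _ => ?_
        rw [← Nat.add_choose_mul_factorial_mul_factorial, lagCoeff, neg_pow', pow_add, pow_add]
        push_cast
        field_simp
        ring
    _ = (-1) ^ n * j.choose n * j ! / 2 ^ (j + 1) := by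
        rw [Int.alternating_sum_range_choose_mul_add_choose]
        push_cast
        ring

theorem integral_lagPhi_mul_lagPhi (n k : ℕ) :
    ∫ x in Ioi 0, lagPhi n x * lagPhi k x = if n = k then 1 / 2 else 0 := by
  calc ∫ x in Ioi 0, lagPhi n x * lagPhi k x
      = ∫ x in Ioi 0, ∑ j ∈ range (k + 1), lagCoeff k j * (powMulExp 1 j x * lagPhi n x) := by
        simp_rw [lagPhi_eq_sum k, mul_sum]
        exact integral_congr_ae (ae_of_all _ fun x => sum_congr rfl fun j _ => by ring)
    _ = ∑ j ∈ range (k + 1), lagCoeff k j * ((-1) ^ n * j.choose n * j ! / 2 ^ (j + 1)) := by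
        rw [integral_finsetSum _ fun j _ =>
          (integrable_powMulExp_mul one_pos j (memLp_lagPhi n)).const_mul _]
        simp_rw [integral_const_mul, integral_powMulExp_mul_lagPhi]
    _ = (-1) ^ n / 2 *
          ((∑ j ∈ range (k + 1), (-1 : ℤ) ^ j * k.choose j * j.choose n : ℤ) : ℝ) := by
        push_cast
        rw [mul_sum]
        refine sum_congr rfl fun j _ => ?_
        rw [lagCoeff, neg_pow', pow_succ]
        field_simp
    _ = if n = k then 1 / 2 else 0 := by
        rw [Int.alternating_sum_range_choose_mul_choose]
        rcases eq_or_ne k n with rfl | h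
        · simp only [if_true]
          push_cast
          rw [div_mul_eq_mul_div, ← pow_add, ← two_mul, pow_mul]
          norm_num
        · simp [h, h.symm]

section MeasureSpace

variable {α : Type*} [MeasurableSpace α] {μ : Measure α}

theorem integral_comp_mul_eq_zero_of_integral_pow_mul_eq_zero {u h : α → ℝ} {a b : ℝ}
    (hu : AEStronglyMeasurable u μ) (hab : ∀ᵐ x ∂μ, u x ∈ Icc a b) (hh : Integrable h μ)
    (hmom : ∀ m : ℕ, ∫ x, u x ^ m * h x ∂μ = 0) {G : ℝ → ℝ} (hG : Continuous G) :
    ∫ x, G (u x) * h x ∂μ = 0 := by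
  have hint : ∀ q : ℝ → ℝ, Continuous q → Integrable (fun x => q (u x) * h x) μ := by
    intro q hq
    obtain ⟨C, hC⟩ := isCompact_Icc.exists_bound_of_continuousOn hq.continuousOn
    exact hh.bdd_mul (hq.comp_aestronglyMeasurable hu) (hab.mono fun x hx => hC _ hx)
  have hpoly : ∀ p : ℝ[X], ∫ x, p.eval (u x) * h x ∂μ = 0 := by
    intro p
    simp_rw [Polynomial.eval_eq_sum_range, sum_mul, mul_assoc]
    rw [integral_finsetSum _ fun m _ => (hint _ (continuous_pow m)).const_mul _]
    simp [integral_const_mul, hmom]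
  refine eq_of_forall_dist_le fun ε hε => ?_
  set C := ∫ x, ‖h x‖ ∂μ
  have hC : 0 < C + 1 := by
    have : 0 ≤ C := integral_nonneg fun _ => norm_nonneg _
    linarith
  obtain ⟨p, hp⟩ := exists_polynomial_near_of_continuousOn a b G hG.continuousOn (ε / (C + 1))
    (by positivity)
  have hdiff : ∫ x, G (u x) * h x ∂μ = ∫ x, (G (u x) - p.eval (u x)) * h x ∂μ := by
    simp_rw [sub_mul]
    rw [integral_sub (hint G hG) (hint _ p.continuous), hpoly, sub_zero]
  calc dist (∫ x, G (u x) * h x ∂μ) 0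
      = ‖∫ x, (G (u x) - p.eval (u x)) * h x ∂μ‖ := by rw [_root_.dist_zero_right, hdiff]
    _ ≤ ∫ x, ε / (C + 1) * ‖h x‖ ∂μ := by
        refine norm_integral_le_of_norm_le (hh.norm.const_mul _) (hab.mono fun x hx => ?_)
        rw [norm_mul, Real.norm_eq_abs, abs_sub_comm]
        exact mul_le_mul_of_nonneg_right (hp _ hx).le (norm_nonneg _)
    _ ≤ ε := by
        rw [integral_const_mul, div_mul_eq_mul_div, div_le_iff₀ hC]
        nlinarith

theorem L2.inner_toLp_eq_integral_mul {f : α → ℝ} (hf : MemLp f 2 μ) (g : Lp ℝ 2 μ) :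
    ⟪hf.toLp f, g⟫ = ∫ x, f x * g x ∂μ := by
  rw [L2.inner_def]
  refine integral_congr_ae ?_
  filter_upwards [hf.coeFn_toLp] with x hx
  simp [hx, mul_comm]

end MeasureSpace

theorem exists_continuous_comp_exp_neg_eq {g : ℝ → ℝ} (hg : Continuous g) {R : ℝ}
    (hR : ∀ x, R < x → g x = 0) :
    ∃ G : ℝ → ℝ, Continuous G ∧ ∀ x, G (Real.exp (-x)) = g x := by
  -- Clamping at `δ` keeps `log` away from `0` and only matters for `x > R + 1`, where `g = 0`.
  set δ := Real.exp (-(R + 1))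
  refine ⟨fun u => g (-Real.log (max u δ)), ?_, fun x => ?_⟩
  · exact hg.comp ((continuous_id.max continuous_const).log
      fun u => (lt_max_of_lt_right (Real.exp_pos _)).ne').neg
  · rcases le_total δ (Real.exp (-x)) with hx | hx
    · simp [max_eq_left hx]
    · have hRx : R + 1 ≤ x := by simpa [δ] using hx
      simp only [max_eq_right hx, δ, Real.log_exp, neg_neg]
      rw [hR _ (lt_add_one R), hR _ (by linarith)]

theorem integral_powMulExp_mul_eq_zero_of_integral_lagPhi_mul_eq_zero {F : ℝ → ℝ}
    (hF : MemLp F 2 μ₊) (h : ∀ n, ∫ x, lagPhi n x * F x ∂μ₊ = 0) (m : ℕ) :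
    ∫ x, powMulExp 1 m x * F x ∂μ₊ = 0 := by
  induction m using Nat.strong_induction_on with
  | _ m ih =>
    have hexpand : ∫ x, lagPhi m x * F x ∂μ₊
        = ∑ i ∈ range (m + 1), lagCoeff m i * ∫ x, powMulExp 1 i x * F x ∂μ₊ := by
      simp_rw [lagPhi_eq_sum, sum_mul, mul_assoc]
      rw [integral_finsetSum _ fun i _ => (integrable_powMulExp_mul one_pos i hF).const_mul _]
      simp_rw [integral_const_mul]
    have hlead : lagCoeff m m ≠ 0 := by
      simp [lagCoeff, Nat.factorial_ne_zero]
    rw [h, sum_range_succ, sum_eq_zero fun i hi => by rw [ih i (mem_range.mp hi), mul_zero],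
      zero_add] at hexpand
    exact (mul_eq_zero.mp hexpand.symm).resolve_left hlead

theorem integral_powMulExp_mul_eq_zero_of_lt_two_mul {F : ℝ → ℝ} (hF : MemLp F 2 μ₊)
    {b c : ℝ} (hc : 0 < c) (hcb : c < 2 * b) (h : ∀ m, ∫ x, powMulExp b m x * F x ∂μ₊ = 0)
    (k : ℕ) :
    ∫ x, powMulExp c k x * F x ∂μ₊ = 0 := by
  have hb : 0 < b - |b - c| := by cases abs_cases (b - c) <;> linarith
  have hbound : ∀ x, HasSum (fun m => |b - c| ^ m / m ! * (powMulExp b (k + m) x * ‖F x‖))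
      (powMulExp (b - |b - c|) k x * ‖F x‖) := fun x => by
    simpa [mul_assoc] using (hasSum_powMulExp b (b - |b - c|) k x).mul_right ‖F x‖
  have hsum := hasSum_integral_of_dominated_convergence
    (F := fun m x => (b - c) ^ m / m ! * (powMulExp b (k + m) x * F x))
    (f := fun x => powMulExp c k x * F x)
    (fun m x => |b - c| ^ m / m ! * (powMulExp b (k + m) x * ‖F x‖))
    (fun m => ((continuous_powMulExp b _).aestronglyMeasurable.mul hF.1).const_mul _)
    (fun m => by
      filter_upwards [self_mem_ae_restrict measurableSet_Ioi] with x hx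
      have : 0 ≤ powMulExp b (k + m) x := by unfold powMulExp; have := hx.out.le; positivity
      simp [abs_of_nonneg this])
    (ae_of_all _ fun x => (hbound x).summable)
    ((integrable_powMulExp_mul hb k hF.norm).congr
      (ae_of_all _ fun x => (hbound x).tsum_eq.symm))
    (ae_of_all _ fun x => by
      simpa [mul_assoc] using (hasSum_powMulExp b c k x).mul_right (F x))
  simp_rw [integral_const_mul, h, mul_zero] at hsum
  exact hsum.unique hasSum_zero

theorem integral_powMulExp_mul_eq_zero_of_pos {F : ℝ → ℝ} (hF : MemLp F 2 μ₊)
    (h : ∀ m, ∫ x, powMulExp 1 m x * F x ∂μ₊ = 0) {c : ℝ} (hc : 0 < c) (k : ℕ) :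
    ∫ x, powMulExp c k x * F x ∂μ₊ = 0 := by
  have hgeom : ∀ n : ℕ, ∀ m, ∫ x, powMulExp ((3 / 2) ^ n) m x * F x ∂μ₊ = 0 := by
    intro n
    induction n with
    | zero => simpa using h
    | succ n ih =>
      refine integral_powMulExp_mul_eq_zero_of_lt_two_mul hF (by positivity) ?_ ih
      rw [pow_succ]
      linarith [pow_pos (by norm_num : (0 : ℝ) < 3 / 2) n]
  obtain ⟨n, hn⟩ := pow_unbounded_of_one_lt c (by norm_num : (1 : ℝ) < 3 / 2)
  exact integral_powMulExp_mul_eq_zero_of_lt_two_mul hF hc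
    (by linarith [pow_pos (by norm_num : (0 : ℝ) < 3 / 2) n]) (hgeom n) k

theorem ae_eq_zero_of_integral_exp_neg_mul_eq_zero {F : ℝ → ℝ} (hF : MemLp F 2 μ₊)
    (h : ∀ m : ℕ, ∫ x, powMulExp (m + 1) 0 x * F x ∂μ₊ = 0) : F =ᵐ[μ₊] 0 := by
  have hexp : ∀ x, powMulExp 1 0 x = Real.exp (-x) := fun x => by simp [powMulExp]
  have hint : Integrable (fun x => Real.exp (-x) * F x) μ₊ := by
    simpa [hexp] using integrable_powMulExp_mul one_pos 0 hF
  have hzero : ∀ᵐ x, (Set.Ioi 0).indicator (fun x => Real.exp (-x) * F x) x = 0 := by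
    refine ae_eq_zero_of_integral_contDiff_smul_eq_zero
      ((integrable_indicator_iff measurableSet_Ioi).2 hint).locallyIntegrable fun g hg hgc => ?_
    obtain ⟨R, hR⟩ := hgc.isCompact.bddAbove
    obtain ⟨G, hG, hGg⟩ := exists_continuous_comp_exp_neg_eq hg.continuous (R := R)
      fun x hx => image_eq_zero_of_notMem_tsupport fun hmem => (hR hmem).not_gt hx
    simp_rw [smul_eq_mul, ← indicator_mul_right, integral_indicator measurableSet_Ioi, ← hGg]
    refine integral_comp_mul_eq_zero_of_integral_pow_mul_eq_zero (a := 0) (b := 1)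
      (by fun_prop) ?_ hint (fun m => ?_) hG
    · filter_upwards [self_mem_ae_restrict measurableSet_Ioi] with x hx
      exact ⟨(Real.exp_pos _).le, Real.exp_le_one_iff.2 (neg_nonpos.2 hx.out.le)⟩
    · have hpow : ∀ x, Real.exp (-x) ^ m * (Real.exp (-x) * F x)
          = powMulExp (m + 1) 0 x * F x := fun x => by
          rw [← Real.exp_nat_mul, ← mul_assoc, ← Real.exp_add, powMulExp, pow_zero, one_mul]
          ring_nf
      simpa only [hpow] using h m
  filter_upwards [ae_restrict_of_ae hzero, self_mem_ae_restrict measurableSet_Ioi] with x hx hmem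
  simpa [indicator_of_mem hmem, Real.exp_ne_zero] using hx

theorem ae_eq_zero_of_integral_lagPhi_mul_eq_zero {F : ℝ → ℝ} (hF : MemLp F 2 μ₊)
    (h : ∀ n, ∫ x, lagPhi n x * F x ∂μ₊ = 0) : F =ᵐ[μ₊] 0 :=
  ae_eq_zero_of_integral_exp_neg_mul_eq_zero hF fun m =>
    integral_powMulExp_mul_eq_zero_of_pos hF
      (integral_powMulExp_mul_eq_zero_of_integral_lagPhi_mul_eq_zero hF h) (by positivity) 0

noncomputable def lagPhiLp (n : ℕ) : Lp ℝ 2 μ₊ := ((memLp_lagPhi n).const_mul √2).toLp _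

theorem coeFn_lagPhiLp (n : ℕ) : lagPhiLp n =ᵐ[μ₊] fun x => √2 * lagPhi n x :=
  MemLp.coeFn_toLp _

theorem inner_lagPhiLp (n : ℕ) (g : Lp ℝ 2 μ₊) :
    ⟪lagPhiLp n, g⟫ = √2 * ∫ x, lagPhi n x * g x ∂μ₊ := by
  simp_rw [lagPhiLp, L2.inner_toLp_eq_integral_mul, ← integral_const_mul, mul_assoc]

theorem orthonormal_lagPhiLp : Orthonormal ℝ lagPhiLp := by
  refine orthonormal_iff_ite.2 fun n k => ?_
  have hk : ∫ x, lagPhi n x * lagPhiLp k x ∂μ₊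
      = √2 * ∫ x, lagPhi n x * lagPhi k x ∂μ₊ := by
    rw [← integral_const_mul]
    refine integral_congr_ae ?_
    filter_upwards [coeFn_lagPhiLp k] with x hx
    rw [hx, mul_left_comm]
  rw [inner_lagPhiLp, hk, integral_lagPhi_mul_lagPhi, ← mul_assoc, Real.mul_self_sqrt zero_le_two]
  split_ifs <;> norm_num

theorem orthogonal_span_lagPhiLp_eq_bot : (Submodule.span ℝ (range lagPhiLp))ᗮ = ⊥ := by
  refine (Submodule.eq_bot_iff _).2 fun g hg => Lp.eq_zero_iff_ae_eq_zero.2 ?_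
  refine ae_eq_zero_of_integral_lagPhi_mul_eq_zero (Lp.memLp g) fun n => ?_
  have := Submodule.inner_right_of_mem_orthogonal (Submodule.subset_span (mem_range_self n)) hg
  rw [inner_lagPhiLp] at this
  exact (mul_eq_zero.1 this).resolve_left (by positivity)

theorem laguerre_orthogonal_and_complete :
    (∀ n k : ℕ, (∫ x in Ioi (0:ℝ), lagPhi n x * lagPhi k x)
        = if n = k then (1:ℝ) / 2 else 0) ∧
    ∃ b : HilbertBasis ℕ ℝ (Lp ℝ 2 (volume.restrict (Ioi (0:ℝ)))),
      ∀ n : ℕ, ⇑(b n) =ᵐ[volume.restrict (Ioi (0:ℝ))]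
        fun x => Real.sqrt 2 * lagPhi n x := by
  refine ⟨integral_lagPhi_mul_lagPhi,
    .mkOfOrthogonalEqBot orthonormal_lagPhiLp orthogonal_span_lagPhiLp_eq_bot, fun n => ?_⟩
  rw [HilbertBasis.coe_mkOfOrthogonalEqBot]
  exact coeFn_lagPhiLp n
end

section
/- For every n ∈ ℕ, m ∈ ℤ, and every x ∈ ℂ \ {0}, the Rodrigues-type formula L_{n,m}(x) = (e^x / (x^m · n!)) · (d^n/dx^n)(e^{−x} x^{n+m}) holds. -/
/-- Generalized binomial coefficient `C(a, k)` for integer `a`, as a complex number. -/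
noncomputable def zchoose (a : ℤ) (k : ℕ) : ℂ :=
  (∏ j ∈ Finset.range k, ((a : ℂ) - (j : ℂ))) / (Nat.factorial k : ℂ)

/-- The generalized Laguerre polynomial `L_{n,m}(x) = ∑_{k=0}^n C(n+m, n-k) (-x)^k / k!`,
as an entire function of `x ∈ ℂ`. -/
noncomputable def lagLC (n : ℕ) (m : ℤ) (x : ℂ) : ℂ :=
  ∑ k ∈ Finset.range (n + 1), zchoose ((n : ℤ) + m) (n - k) * (-x) ^ k / (Nat.factorial k : ℂ)

/-- The generalized Laguerre function `φ_{n,m}(x) = e^{-x} L_{n,m}(2x)`. -/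
noncomputable def lagPhiC (n : ℕ) (m : ℤ) (x : ℂ) : ℂ := Complex.exp (-x) * lagLC n m (2 * x)

/-! Expand the `n`-th derivative by the Leibniz rule: the `k`-th derivative of `e^{-y}` is
`(-1)^k e^{-y}` and the `(n-k)`-th derivative of `y^{n+m}` is `(n-k)! C(n+m, n-k) y^{m+k}`, so after
multiplying by `e^x / (x^m n!)` the `k`-th Leibniz term is the `k`-th term of `L_{n,m}(x)`. -/

open Finset Nat

theorem iteratedDeriv_fun_mul_div_factorial {𝕜 : Type*} [NontriviallyNormedField 𝕜] [CharZero 𝕜]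
    {f g : 𝕜 → 𝕜} {n : ℕ} {x : 𝕜} (hf : ContDiffAt 𝕜 n f x) (hg : ContDiffAt 𝕜 n g x) :
    iteratedDeriv n (fun y => f y * g y) x / n ! =
      ∑ i ∈ range (n + 1), iteratedDeriv i f x / i ! * (iteratedDeriv (n - i) g x / (n - i)!) := by
  rw [iteratedDeriv_fun_mul hf hg, sum_div]
  refine sum_congr rfl fun i hi => ?_
  have hin := mem_range_succ_iff.mp hi
  have hchoose : (n.choose i : 𝕜) ≠ 0 := cast_ne_zero.mpr (choose_pos hin).ne'
  have hfac : (n.choose i * i ! * (n - i)! : 𝕜) = n ! := by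
    exact_mod_cast choose_mul_factorial_mul_factorial hin
  rw [← hfac]
  field_simp

theorem iteratedDeriv_cexp_neg (k : ℕ) (x : ℂ) :
    iteratedDeriv k (fun y : ℂ => Complex.exp (-y)) x = (-1) ^ k * Complex.exp (-x) := by
  simpa using congr_fun (iteratedDeriv_cexp_const_mul k (-1)) x

theorem iteratedDeriv_zpow_div_factorial (a : ℤ) (k : ℕ) (x : ℂ) :
    iteratedDeriv k (fun y : ℂ => y ^ a) x / k ! = zchoose a k * x ^ (a - k) := by
  rw [iteratedDeriv_eq_iterate, iter_deriv_zpow, zchoose]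
  ring

theorem genLaguerre_rodrigues (n : ℕ) (m : ℤ) (x : ℂ) (hx : x ≠ 0) :
    lagLC n m x = Complex.exp x / (x ^ m * (Nat.factorial n : ℂ)) *
      iteratedDeriv n (fun y : ℂ => Complex.exp (-y) * y ^ ((n : ℤ) + m)) x := by
  have hleibniz := iteratedDeriv_fun_mul_div_factorial (n := n)
    (f := fun y : ℂ => Complex.exp (-y)) (g := fun y : ℂ => y ^ ((n : ℤ) + m))
    (by fun_prop) (analyticAt_id.fun_zpow hx).contDiffAt
  simp only [iteratedDeriv_cexp_neg, iteratedDeriv_zpow_div_factorial] at hleibniz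
  rw [div_mul_eq_mul_div, mul_div_mul_comm, mul_comm, hleibniz, lagLC, sum_mul]
  refine sum_congr rfl fun k hk => ?_
  have hpow : x ^ ((n : ℤ) + m - (n - k : ℕ)) = x ^ m * x ^ k := by
    rw [Nat.cast_sub (mem_range_succ_iff.mp hk), ← zpow_natCast, ← zpow_add₀ hx]
    ring_nf
  rw [hpow, neg_pow, Complex.exp_neg]
  field_simp
end

section
/- Let n, k, l ∈ ℕ and let p be a polynomial of degree at most n. If |l − k| > n, then ∫₀^∞ p(x) φ_l(x) φ_k(x) dx = 0. -/
open MeasureTheory Set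
open scoped ENNReal

/-!
Both Laguerre functions carry a factor `e^{-x}`, so the integrand is `q(x) L_l(2x) e^{-2x}` with
`deg q ≤ n + k < l` (after swapping `l` and `k` if needed). It therefore suffices that
`∫₀^∞ x^j L_l(2x) e^{-2x} dx = 0` for `j < l`. Expanding `L_l` and using
`∫₀^∞ x^m e^{-2x} dx = m!/2^{m+1}`, this integral is
`2^{-(j+1)} ∑_k (-1)^k C(l,k) (k+1)⋯(k+j)`, an `l`-th finite difference of a polynomial of
degree `j < l` in `k`, hence zero.
-/

open Polynomial Finset
open scoped Nat

theorem integrableOn_pow_mul_exp_neg_mul (m : ℕ) {b : ℝ} (hb : 0 < b) :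
    IntegrableOn (fun x : ℝ => x ^ m * Real.exp (-(b * x))) (Ioi 0) := by
  simpa only [Real.rpow_one, Real.rpow_natCast, neg_mul] using
    integrableOn_rpow_mul_exp_neg_mul_rpow (s := m) (p := 1)
      (by linarith [m.cast_nonneg (α := ℝ)]) one_pos hb

theorem integral_pow_mul_exp_neg_mul (m : ℕ) {b : ℝ} (hb : 0 < b) :
    ∫ x in Ioi (0 : ℝ), x ^ m * Real.exp (-(b * x)) = m ! / b ^ (m + 1) := by
  have h := Real.integral_rpow_mul_exp_neg_mul_Ioi (a := m + 1) (by positivity) hb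
  rw [add_sub_cancel_right, Real.Gamma_nat_eq_factorial, ← Nat.cast_succ, Real.rpow_natCast] at h
  simpa [Real.rpow_natCast, div_eq_inv_mul] using h

theorem integrableOn_eval_mul_exp_neg_mul (q : ℝ[X]) {b : ℝ} (hb : 0 < b) :
    IntegrableOn (fun x => q.eval x * Real.exp (-(b * x))) (Ioi 0) := by
  induction q using Polynomial.induction_on' with
  | add r s hr hs => simpa only [eval_add, add_mul, Pi.add_def] using hr.add hs
  | monomial m a =>
    simpa only [eval_monomial, mul_assoc, IntegrableOn] using
      (integrableOn_pow_mul_exp_neg_mul m hb).const_mul a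

theorem Polynomial.sum_range_neg_one_pow_mul_choose_mul_eval_eq_zero {R : Type*} [CommRing R]
    {P : R[X]} {l : ℕ} (hP : P.natDegree < l) (y : R) :
    ∑ k ∈ range (l + 1), (-1) ^ k * (l.choose k : R) * P.eval (y + k) = 0 := by
  have h := congr_fun (fwdDiff_iter_eq_zero_of_degree_lt hP) y
  rw [fwdDiff_iter_eq_sum_shift, Pi.zero_apply] at h
  calc ∑ k ∈ range (l + 1), (-1) ^ k * (l.choose k : R) * P.eval (y + k)
      = (-1) ^ l *
        ∑ k ∈ range (l + 1), ((-1 : ℤ) ^ (l - k) * l.choose k) • P.eval (y + k • 1) := by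
        rw [mul_sum]
        refine sum_congr rfl fun k hk => ?_
        have hkl : k ≤ l := Nat.lt_succ_iff.mp (mem_range.mp hk)
        rw [nsmul_one, zsmul_eq_mul]
        push_cast
        rw [← mul_assoc, ← mul_assoc, ← pow_add, show l + (l - k) = k + 2 * (l - k) by omega,
          pow_add, pow_mul, neg_one_sq, one_pow, mul_one]
    _ = 0 := by rw [h, mul_zero]

noncomputable def lagPoly (l : ℕ) : ℝ[X] :=
  ∑ k ∈ range (l + 1), C ((l.choose (l - k) : ℝ) * (-1) ^ k / k !) * X ^ k

theorem eval_lagPoly (l : ℕ) (x : ℝ) : (lagPoly l).eval x = lagL l x := by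
  simp only [lagPoly, lagL, eval_finsetSum, eval_mul, eval_pow, eval_C, eval_X]
  exact sum_congr rfl fun k _ => by rw [neg_pow]; ring

theorem natDegree_lagPoly_le (l : ℕ) : (lagPoly l).natDegree ≤ l := by
  refine natDegree_sum_le_of_forall_le _ _ fun k hk => ?_
  exact (natDegree_C_mul_X_pow_le _ _).trans (Nat.lt_succ_iff.mp (mem_range.mp hk))

theorem ascPochhammer_eval_one_add_natCast (j k : ℕ) :
    (ascPochhammer ℝ j).eval (1 + k : ℝ) = ((j + k)! : ℝ) / k ! := by
  rw [eq_div_iff (by positivity), add_comm (1 : ℝ), ← Nat.cast_succ,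
    ascPochhammer_nat_eq_natCast_ascFactorial, ← Nat.cast_mul, mul_comm,
    Nat.factorial_mul_ascFactorial, add_comm]

theorem integral_pow_mul_lagL_two_mul_mul_exp_eq_zero {j l : ℕ} (hj : j < l) :
    ∫ x in Ioi (0 : ℝ), x ^ j * lagL l (2 * x) * Real.exp (-(2 * x)) = 0 := by
  have hexpand : ∀ x : ℝ, x ^ j * lagL l (2 * x) * Real.exp (-(2 * x)) =
      ∑ k ∈ range (l + 1), (l.choose (l - k) * (-2) ^ k / k ! : ℝ) *
        (x ^ (j + k) * Real.exp (-(2 * x))) := fun x => by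
    rw [lagL, mul_sum, sum_mul]
    exact sum_congr rfl fun k _ => by ring
  have hterm : ∀ k ∈ range (l + 1),
      (l.choose (l - k) * (-2) ^ k / k ! : ℝ) * ((j + k)! / 2 ^ (j + k + 1)) =
        (-1) ^ k * l.choose k * (ascPochhammer ℝ j).eval (1 + k : ℝ) / 2 ^ (j + 1) :=
      fun k hk => by
    rw [Nat.choose_symm (Nat.lt_succ_iff.mp (mem_range.mp hk)),
      ascPochhammer_eval_one_add_natCast, neg_pow (2 : ℝ)]
    field_simp
    ring
  simp_rw [hexpand]
  rw [integral_finsetSum _ fun k _ =>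
    (integrableOn_pow_mul_exp_neg_mul (j + k) two_pos).const_mul _]
  simp_rw [integral_const_mul, integral_pow_mul_exp_neg_mul _ two_pos]
  rw [sum_congr rfl hterm, ← sum_div, sum_range_neg_one_pow_mul_choose_mul_eval_eq_zero
    (by rwa [ascPochhammer_natDegree]), zero_div]

theorem integral_eval_mul_lagL_two_mul_mul_exp_eq_zero {q : ℝ[X]} {l : ℕ}
    (hq : q.natDegree < l) :
    ∫ x in Ioi (0 : ℝ), q.eval x * lagL l (2 * x) * Real.exp (-(2 * x)) = 0 := by
  have hexpand : ∀ x : ℝ, q.eval x * lagL l (2 * x) * Real.exp (-(2 * x)) =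
      ∑ m ∈ range l, q.coeff m * (x ^ m * lagL l (2 * x) * Real.exp (-(2 * x))) := fun x => by
    rw [eval_eq_sum_range' hq, sum_mul, sum_mul]
    exact sum_congr rfl fun m _ => by ring
  have hint (m : ℕ) :
      IntegrableOn (fun x => x ^ m * lagL l (2 * x) * Real.exp (-(2 * x))) (Ioi 0) := by
    have h := integrableOn_eval_mul_exp_neg_mul (X ^ m * (lagPoly l).comp (C 2 * X)) two_pos
    simp only [eval_mul, eval_pow, eval_comp, eval_C, eval_X, eval_lagPoly] at h
    exact h
  simp_rw [hexpand]
  rw [integral_finsetSum _ fun m _ => (hint m).const_mul _]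
  exact sum_eq_zero fun m hm => by
    rw [integral_const_mul, integral_pow_mul_lagL_two_mul_mul_exp_eq_zero (mem_range.mp hm),
      mul_zero]

theorem integral_eval_mul_lagPhi_mul_lagPhi_eq_zero_of_lt {n l k : ℕ} {p : ℝ[X]}
    (hp : p.natDegree ≤ n) (hlk : n + k < l) :
    ∫ x in Ioi (0 : ℝ), p.eval x * lagPhi l x * lagPhi k x = 0 := by
  set q := p * (lagPoly k).comp (C 2 * X)
  have hq : q.natDegree < l := by
    calc q.natDegree ≤ n + k * 1 := natDegree_mul_le.trans <| add_le_add hp <|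
          natDegree_comp_le.trans <|
            Nat.mul_le_mul (natDegree_lagPoly_le k) (natDegree_C_mul_X 2 two_ne_zero).le
      _ < l := by rwa [mul_one]
  have hintegrand (x : ℝ) :
      p.eval x * lagPhi l x * lagPhi k x = q.eval x * lagL l (2 * x) * Real.exp (-(2 * x)) := by
    simp only [q, lagPhi, eval_mul, eval_comp, eval_C, eval_X, eval_lagPoly,
      show -(2 * x) = -x + -x by ring, Real.exp_add]
    ring
  simp_rw [hintegrand]
  exact integral_eval_mul_lagL_two_mul_mul_exp_eq_zero hq

theorem laguerre_weighted_orthogonality (n l k : ℕ) (p : Polynomial ℝ)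
    (hp : p.natDegree ≤ n) (hlk : (n : ℤ) < |(l : ℤ) - (k : ℤ)|) :
    ∫ x in Ioi (0:ℝ), p.eval x * lagPhi l x * lagPhi k x = 0 := by
  rcases lt_abs.mp hlk with h | h
  · exact integral_eval_mul_lagPhi_mul_lagPhi_eq_zero_of_lt hp (by omega)
  · simp_rw [mul_right_comm _ (lagPhi l _)]
    exact integral_eval_mul_lagPhi_mul_lagPhi_eq_zero_of_lt hp (by omega)
end

section
/- For every t ∈ ℂ with |t| < 1 and every x ∈ ℂ, the series Σ_{k=0}^∞ L_k(x) t^k converges and equals e^{−tx/(1−t)} / (1 − t). -/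
/-!
Write `L_n(x) tⁿ = ∑_{k+m=n} C(k+m, k) (-x)ᵏ/k! · t^(k+m)`. This double series converges
absolutely for `|t| < 1`, so it may be summed over `m` first: by the negative binomial series
`∑ₘ C(k+m, k) tᵐ = (1-t)^-(k+1)`, the inner sums are the terms of the exponential series of
`-tx/(1-t)`, divided by `1-t`.
-/

/-- The Laguerre polynomial `L_n(x) = ∑_{k=0}^n C(n, n-k) (-x)^k / k!` over `ℂ`. -/
noncomputable def lagLc (n : ℕ) (x : ℂ) : ℂ :=
  ∑ k ∈ Finset.range (n + 1), (n.choose (n - k) : ℂ) * (-x) ^ k / (Nat.factorial k : ℂ)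

open Finset Nat

theorem HasSum.sum_antidiagonal {α A : Type*} [AddCommMonoid α] [TopologicalSpace α]
    [ContinuousAdd α] [RegularSpace α] [AddCommMonoid A] [HasAntidiagonal A]
    {f : A × A → α} {a : α} (hf : HasSum f a) :
    HasSum (fun n ↦ ∑ p ∈ antidiagonal n, f p) a :=
  (HasAntidiagonal.sigmaAntidiagonalEquivProd.hasSum_iff.2 hf).sigma
    fun n ↦ (antidiagonal n).hasSum f

section DoubleSeries

variable {𝕜 : Type*} [RCLike 𝕜]

noncomputable def laguerreDoubleTerm (x t : 𝕜) (p : ℕ × ℕ) : 𝕜 :=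
  ((p.1 + p.2).choose p.1 : 𝕜) * x ^ p.1 / p.1 ! * t ^ (p.1 + p.2)

theorem hasSum_laguerreDoubleTerm_fiber (x : 𝕜) {t : 𝕜} (ht : ‖t‖ < 1) (k : ℕ) :
    HasSum (fun m ↦ laguerreDoubleTerm x t (k, m)) ((x * t / (1 - t)) ^ k / k ! / (1 - t)) := by
  have h1t : 1 - t ≠ 0 := sub_ne_zero.2 fun h ↦ by simp [← h] at ht
  have hsum_eq : x ^ k / k ! * t ^ k * (1 / (1 - t) ^ (k + 1)) =
      (x * t / (1 - t)) ^ k / k ! / (1 - t) := by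
    rw [div_pow, mul_pow, pow_succ]
    field_simp
  have h := (hasSum_choose_mul_geometric_of_norm_lt_one k ht).mul_left (x ^ k / k ! * t ^ k)
  rw [hsum_eq] at h
  refine h.congr_fun fun m ↦ ?_
  rw [laguerreDoubleTerm, add_comm k m, pow_add]
  ring

theorem norm_laguerreDoubleTerm (x t : 𝕜) (p : ℕ × ℕ) :
    ‖laguerreDoubleTerm x t p‖ = laguerreDoubleTerm ‖x‖ ‖t‖ p := by
  simp [laguerreDoubleTerm]

theorem summable_laguerreDoubleTerm (x : 𝕜) {t : 𝕜} (ht : ‖t‖ < 1) :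
    Summable (laguerreDoubleTerm x t) := by
  refine .of_norm ?_
  simp_rw [norm_laguerreDoubleTerm]
  have hfiber := hasSum_laguerreDoubleTerm_fiber ‖x‖ (t := ‖t‖) (by simpa using ht)
  refine (summable_prod_of_nonneg fun p ↦ ?_).2
    ⟨fun k ↦ (hfiber k).summable, ?_⟩
  · unfold laguerreDoubleTerm
    positivity
  · simp_rw [fun k ↦ (hfiber k).tsum_eq]
    exact (NormedSpace.expSeries_div_summable _).div_const _

theorem hasSum_laguerreDoubleTerm (x : 𝕜) {t : 𝕜} (ht : ‖t‖ < 1) :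
    HasSum (laguerreDoubleTerm x t) (NormedSpace.exp (x * t / (1 - t)) / (1 - t)) := by
  have hsum := (summable_laguerreDoubleTerm x ht).hasSum
  have hexp := (NormedSpace.expSeries_div_hasSum_exp (x * t / (1 - t))).div_const (1 - t)
  rwa [hexp.unique (hsum.prod_fiberwise (hasSum_laguerreDoubleTerm_fiber x ht))]

end DoubleSeries

theorem sum_antidiagonal_laguerreDoubleTerm (x t : ℂ) (n : ℕ) :
    ∑ p ∈ antidiagonal n, laguerreDoubleTerm x t p = lagLc n (-x) * t ^ n := by
  rw [Nat.sum_antidiagonal_eq_sum_range_succ_mk, lagLc, sum_mul]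
  refine sum_congr rfl fun k hk ↦ ?_
  have hkn : k ≤ n := Nat.lt_succ_iff.1 (mem_range.1 hk)
  rw [laguerreDoubleTerm, Nat.add_sub_cancel' hkn, Nat.choose_symm hkn, neg_neg]

theorem laguerre_generating_function (t x : ℂ) (ht : ‖t‖ < 1) :
    HasSum (fun k : ℕ => lagLc k x * t ^ k)
      (Complex.exp (-(t * x) / (1 - t)) / (1 - t)) := by
  have h := (hasSum_laguerreDoubleTerm (-x) ht).sum_antidiagonal
  simp_rw [sum_antidiagonal_laguerreDoubleTerm, neg_neg] at h
  rwa [Complex.exp_eq_exp_ℂ, show -(t * x) = -x * t by ring]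
end

section
/- For every b ∈ ℂ with Re(b) > −1 and every n ∈ ℕ, ∫₀^∞ e^{−bξ} φ_n(ξ) dξ = (b−1)^n / (b+1)^{n+1}. -/
open MeasureTheory Set
open scoped ENNReal

/-!
Expanding `L_n(2ξ)` turns the integrand into `∑ₖ C(n,k) (-2)ᵏ/k! · ξᵏ e^{-(b+1)ξ}`. For
`Re c > 0` integration by parts gives `∫₀^∞ ξᵏ e^{-cξ} dξ = k!/c^{k+1}`, so with `c = b + 1` the
integral is `∑ₖ C(n,k) (-2)ᵏ / cᵏ⁺¹ = (c - 2)ⁿ / cⁿ⁺¹` by the binomial theorem.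
-/

open Filter Topology Complex Finset Nat

section LaplacePow

variable {c : ℂ}

lemma norm_ofReal_pow_mul_cexp_neg_mul {x : ℝ} (hx : 0 ≤ x) (k : ℕ) :
    ‖(x : ℂ) ^ k * cexp (-c * x)‖ = x ^ (k : ℝ) * Real.exp (-c.re * x) := by
  simp [norm_exp, abs_of_nonneg hx, Real.rpow_natCast]

lemma tendsto_ofReal_pow_mul_cexp_neg_mul_atTop (hc : 0 < c.re) (k : ℕ) :
    Tendsto (fun x : ℝ ↦ (x : ℂ) ^ k * cexp (-c * x)) atTop (𝓝 0) := by
  rw [tendsto_zero_iff_norm_tendsto_zero]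
  refine (tendsto_rpow_mul_exp_neg_mul_atTop_nhds_zero k c.re hc).congr' ?_
  filter_upwards [eventually_ge_atTop 0] with x hx
  exact (norm_ofReal_pow_mul_cexp_neg_mul hx k).symm

lemma integrableOn_ofReal_pow_mul_cexp_neg_mul_Ioi (hc : 0 < c.re) (k : ℕ) :
    IntegrableOn (fun x : ℝ ↦ (x : ℂ) ^ k * cexp (-c * x)) (Ioi 0) := by
  have hreal : IntegrableOn (fun x : ℝ ↦ x ^ (k : ℝ) * Real.exp (-c.re * x ^ (1 : ℝ))) (Ioi 0) :=
    integrableOn_rpow_mul_exp_neg_mul_rpow (by linarith [k.cast_nonneg (α := ℝ)]) one_pos hc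
  refine (integrable_norm_iff (by fun_prop)).mp (hreal.congr_fun (fun x hx ↦ ?_) measurableSet_Ioi)
  simp only [Real.rpow_one, norm_ofReal_pow_mul_cexp_neg_mul (le_of_lt hx)]

lemma integral_ofReal_pow_succ_mul_cexp_neg_mul_Ioi (hc : 0 < c.re) (k : ℕ) :
    ∫ x in Ioi (0 : ℝ), (x : ℂ) ^ (k + 1) * cexp (-c * x)
      = (k + 1) / c * ∫ x in Ioi (0 : ℝ), (x : ℂ) ^ k * cexp (-c * x) := by
  have hc0 : c ≠ 0 := fun h ↦ by simp [h] at hc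
  have hu : ∀ x ∈ Ioi (0 : ℝ), HasDerivAt (fun y : ℝ ↦ (y : ℂ) ^ (k + 1)) ((k + 1) * (x : ℂ) ^ k) x :=
    fun x _ ↦ by simpa using (hasDerivAt_pow (k + 1) (x : ℂ)).comp_ofReal
  have hv : ∀ x ∈ Ioi (0 : ℝ), HasDerivAt (fun y : ℝ ↦ -cexp (-c * y) / c) (cexp (-c * x)) x := by
    intro x _
    have h : HasDerivAt (fun y : ℂ ↦ -cexp (-c * y) / c) (cexp (-c * x)) x := by
      have hlin : HasDerivAt (fun y : ℂ ↦ -c * y) (-c) x := by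
        simpa using (hasDerivAt_id (x : ℂ)).const_mul (-c)
      refine (hlin.cexp.neg.div_const c).congr_deriv ?_
      field_simp
    exact h.comp_ofReal
  have hzero : Tendsto (fun x : ℝ ↦ (x : ℂ) ^ (k + 1) * (-cexp (-c * x) / c)) (𝓝[>] 0) (𝓝 0) := by
    have : Continuous (fun x : ℝ ↦ (x : ℂ) ^ (k + 1) * (-cexp (-c * x) / c)) := by fun_prop
    simpa using this.tendsto 0 |>.mono_left nhdsWithin_le_nhds
  have hinfty : Tendsto (fun x : ℝ ↦ (x : ℂ) ^ (k + 1) * (-cexp (-c * x) / c)) atTop (𝓝 0) := by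
    simpa [neg_div, mul_div_assoc, mul_neg] using
      ((tendsto_ofReal_pow_mul_cexp_neg_mul_atTop hc (k + 1)).div_const c).neg
  have hu'v : (fun x : ℝ ↦ (k + 1) * (x : ℂ) ^ k * (-cexp (-c * x) / c))
      = fun x : ℝ ↦ -((k + 1) / c) * ((x : ℂ) ^ k * cexp (-c * x)) := by
    ext x; ring
  rw [integral_Ioi_mul_deriv_eq_deriv_mul hu hv (integrableOn_ofReal_pow_mul_cexp_neg_mul_Ioi hc _)
    (by rw [Pi.mul_def, hu'v]; exact (integrableOn_ofReal_pow_mul_cexp_neg_mul_Ioi hc k).const_mul _)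
    hzero hinfty, hu'v, integral_const_mul]
  ring

lemma integral_ofReal_pow_mul_cexp_neg_mul_Ioi (hc : 0 < c.re) (k : ℕ) :
    ∫ x in Ioi (0 : ℝ), (x : ℂ) ^ k * cexp (-c * x) = k ! / c ^ (k + 1) := by
  induction k with
  | zero => simpa [div_eq_inv_mul] using integral_exp_mul_complex_Ioi (a := -c) (by simpa) 0
  | succ k ih =>
    have hc0 : c ≠ 0 := fun h ↦ by simp [h] at hc
    rw [integral_ofReal_pow_succ_mul_cexp_neg_mul_Ioi hc, ih, Nat.factorial_succ]
    field_simp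
    push_cast
    ring

end LaplacePow

lemma Finset.sum_choose_mul_pow_div_pow_succ {K : Type*} [Field K] {c : K} (hc : c ≠ 0)
    (a : K) (n : ℕ) :
    ∑ k ∈ range (n + 1), (n.choose k : K) * a ^ k / c ^ (k + 1) = (a + c) ^ n / c ^ (n + 1) := by
  rw [add_pow, Finset.sum_div]
  refine Finset.sum_congr rfl fun k hk ↦ ?_
  have hkn : k ≤ n := Finset.mem_range_succ_iff.mp hk
  rw [show n + 1 = (n - k) + (k + 1) by omega]
  field_simp
  ring

lemma lagL_eq_sum_choose (n : ℕ) (x : ℝ) :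
    lagL n x = ∑ k ∈ range (n + 1), (n.choose k : ℝ) * (-x) ^ k / (k ! : ℝ) :=
  Finset.sum_congr rfl fun k hk ↦ by
    rw [Nat.choose_symm (Finset.mem_range_succ_iff.mp hk)]

lemma cexp_neg_mul_mul_lagPhi (b : ℂ) (n : ℕ) (x : ℝ) :
    cexp (-b * x) * (lagPhi n x : ℂ) = ∑ k ∈ range (n + 1),
      (n.choose k * (-2) ^ k / k ! : ℂ) * ((x : ℂ) ^ k * cexp (-(b + 1) * x)) := by
  have hexp : cexp (-(b + 1) * x) = cexp (-b * x) * cexp (-x) := by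
    rw [← Complex.exp_add]; ring_nf
  simp only [lagPhi, lagL_eq_sum_choose, hexp]
  push_cast
  rw [Finset.mul_sum, Finset.mul_sum]
  refine Finset.sum_congr rfl fun k _ ↦ ?_
  rw [← neg_mul, mul_pow]
  ring

theorem laguerre_exp_integral (b : ℂ) (hb : -1 < b.re) (n : ℕ) :
    ∫ ξ in Ioi (0:ℝ), Complex.exp (-b * ξ) * (lagPhi n ξ : ℂ)
      = (b - 1) ^ n / (b + 1) ^ (n + 1) := by
  have hc : 0 < (b + 1).re := by rw [add_re, one_re]; linarith
  have hc0 : b + 1 ≠ 0 := fun h ↦ by simp [h] at hc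
  simp_rw [cexp_neg_mul_mul_lagPhi]
  rw [integral_finsetSum _ fun k _ ↦
    (integrableOn_ofReal_pow_mul_cexp_neg_mul_Ioi hc k).const_mul _]
  simp_rw [integral_const_mul, integral_ofReal_pow_mul_cexp_neg_mul_Ioi hc]
  rw [show b - 1 = -2 + (b + 1) by ring, ← Finset.sum_choose_mul_pow_div_pow_succ hc0]
  refine Finset.sum_congr rfl fun k _ ↦ ?_
  have hk : (k ! : ℂ) ≠ 0 := Nat.cast_ne_zero.2 k.factorial_ne_zero
  field_simp
end

section
/- For every a ∈ ℂ \ ℝ_{≤0} and every n ∈ ℕ, α_{n,1}(a) = ∫₀^∞ ξ^n e^{−ξ} / (2a + ξ)^{n+1} dξ. -/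
open MeasureTheory Set
open scoped ENNReal

/-- `α_{n,k}(a) = ∫₀^∞ e^{-ξ} (a+ξ)^{-k} φ_n(ξ) dξ`. -/
noncomputable def lagAlpha (n k : ℕ) (a : ℂ) : ℂ :=
  ∫ ξ in Ioi (0:ℝ), Complex.exp (-(ξ:ℂ)) / (a + (ξ:ℂ)) ^ k * (lagPhi n ξ : ℂ)

/-!
Substituting `t = 2ξ` gives `α_{n,1}(a) = ∫₀^∞ e^{-t} L_n(t) / (2a + t) dt`. Since
`(d/dt)(p(t) e^{-t}) = (p' - p)(t) e^{-t}`, Rodrigues' formula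
`n! e^{-t} L_n(t) = (d/dt)^n (t^n e^{-t})` reads `n! L_n = (D - 1)^n X^n`, where `D` is the
derivative of polynomials; the binomial theorem for the commuting operators `D` and `1` turns
it into the defining sum of `L_n`. Integrating by parts `n` times moves the derivatives onto
`(2a + t)^{-1}`: the boundary terms vanish at `0` because `X^{n-m}` divides `(D - 1)^m X^n`,
and at `∞` because of the factor `e^{-t}`.
-/

open Polynomial Filter Topology Asymptotics Nat

section DerivativeSubOne

variable {R : Type*} [CommRing R]

theorem Polynomial.derivative_sub_one_pow_apply (n : ℕ) (p : R[X]) :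
    ((derivative - 1 : Module.End R R[X]) ^ n) p =
      ∑ m ∈ Finset.range (n + 1), ((-1) ^ m * n.choose m : R) • derivative^[n - m] p := by
  rw [sub_eq_neg_add, (Commute.neg_one_left (R := Module.End R R[X]) _).add_pow,
    LinearMap.sum_apply]
  refine Finset.sum_congr rfl fun m _ => ?_
  rw [Module.End.mul_apply, Module.End.mul_apply, Module.End.natCast_apply, map_nsmul,
    Module.End.pow_apply derivative]
  rcases Nat.even_or_odd m with hm | hm <;>
    simp [hm.neg_one_pow, Nat.cast_smul_eq_nsmul, nsmul_eq_mul]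

theorem Polynomial.X_pow_dvd_derivative_sub_one_apply {p : R[X]} {k : ℕ}
    (h : X ^ (k + 1) ∣ p) : X ^ k ∣ (derivative - 1 : Module.End R R[X]) p := by
  have hderiv : X ^ k ∣ derivative p := by
    simpa using pow_sub_one_dvd_derivative_of_pow_dvd h
  exact dvd_sub hderiv ((pow_dvd_pow X k.le_succ).trans h)

end DerivativeSubOne

theorem eval_derivative_sub_one_pow_X_pow_eq_factorial_mul_lagL (n : ℕ) (t : ℝ) :
    (((derivative - 1 : Module.End ℝ ℝ[X]) ^ n) (X ^ n)).eval t = n ! * lagL n t := by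
  rw [derivative_sub_one_pow_apply, lagL, eval_finsetSum, Finset.mul_sum]
  refine Finset.sum_congr rfl fun m hm => ?_
  have hmn : m ≤ n := Nat.lt_succ_iff.mp (Finset.mem_range.mp hm)
  rw [iterate_derivative_X_pow_eq_smul, Nat.sub_sub_self hmn, Nat.choose_symm hmn]
  have hfac : (m ! : ℝ) * n.descFactorial (n - m) = n ! := by
    exact_mod_cast Nat.sub_sub_self hmn ▸ Nat.factorial_mul_descFactorial (Nat.sub_le n m)
  simp only [eval_smul, eval_pow, eval_X, smul_eq_mul, neg_pow t]
  rw [← hfac]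
  field_simp

theorem Polynomial.isBigO_eval_mul_exp_neg (p : ℝ[X]) :
    (fun t => p.eval t * Real.exp (-t)) =O[atTop] fun t => Real.exp (-(1 / 2) * t) := by
  have hq : Tendsto (fun t : ℝ => (p.comp (C 2 * X)).eval (t / 2) / Real.exp (t / 2))
      atTop (𝓝 0) :=
    (p.comp (C 2 * X)).tendsto_div_exp_atTop.comp (tendsto_id.atTop_div_const two_pos)
  refine ((hq.isBigO_one ℝ).mul (isBigO_refl (fun t => Real.exp (-(1 / 2) * t)) _)).congr
    (fun t => ?_) (fun t => one_mul _)
  rw [eval_comp, eval_mul, eval_C, eval_X, mul_div_cancel₀ t two_ne_zero, div_mul_eq_mul_div,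
    mul_div_assoc, ← Real.exp_sub]
  ring_nf

theorem Polynomial.hasDerivAt_eval_mul_exp_neg (p : ℝ[X]) (t : ℝ) :
    HasDerivAt (fun t => p.eval t * Real.exp (-t))
      (((derivative - 1 : Module.End ℝ ℝ[X]) p).eval t * Real.exp (-t)) t := by
  refine ((p.hasDerivAt t).fun_mul (hasDerivAt_neg t).exp).congr_deriv ?_
  rw [LinearMap.sub_apply, Module.End.one_apply, eval_sub]
  ring

theorem isBigO_inv_add_ofReal_pow_atTop (z : ℂ) (k : ℕ) :
    (fun t : ℝ => ((z + t) ^ k)⁻¹) =O[atTop] fun _ => (1 : ℝ) := by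
  refine IsBigO.of_bound 1 ?_
  filter_upwards [eventually_ge_atTop (‖z‖ + 1)] with t ht
  have hnorm : 1 ≤ ‖z + t‖ := by
    have := neg_abs_le z.re
    have := Complex.abs_re_le_norm z
    have := Complex.re_le_norm (z + t)
    simp only [Complex.add_re, Complex.ofReal_re] at this
    linarith
  rw [norm_inv, norm_pow, norm_one, mul_one]
  exact inv_le_one_of_one_le₀ (one_le_pow₀ hnorm)

noncomputable def stieltjesIntegrand (p : ℝ[X]) (k : ℕ) (z : ℂ) (t : ℝ) : ℂ :=
  ((p.eval t * Real.exp (-t) : ℝ) : ℂ) / (z + t) ^ k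

section StieltjesIntegrand

variable {z : ℂ}

theorem isBigO_stieltjesIntegrand (p : ℝ[X]) (k : ℕ) :
    stieltjesIntegrand p k z =O[atTop] fun t => Real.exp (-(1 / 2) * t) := by
  refine ((Complex.isBigO_ofReal_left.mpr p.isBigO_eval_mul_exp_neg).mul
    (isBigO_inv_add_ofReal_pow_atTop z k)).congr (fun t => ?_) (fun t => mul_one _)
  rw [stieltjesIntegrand, div_eq_mul_inv]

theorem tendsto_stieltjesIntegrand_atTop (p : ℝ[X]) (k : ℕ) :
    Tendsto (stieltjesIntegrand p k z) atTop (𝓝 0) :=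
  (isBigO_stieltjesIntegrand p k).trans_tendsto
    (Real.tendsto_exp_atBot.comp (tendsto_id.const_mul_atTop_of_neg (by norm_num)))

variable (hz : ∀ t : ℝ, 0 ≤ t → z + t ≠ 0)
include hz

theorem continuousOn_stieltjesIntegrand (p : ℝ[X]) (k : ℕ) :
    ContinuousOn (stieltjesIntegrand p k z) (Ici 0) :=
  ContinuousOn.div (by fun_prop) (by fun_prop) fun t ht => pow_ne_zero _ (hz t ht)

theorem integrableOn_stieltjesIntegrand (p : ℝ[X]) (k : ℕ) :
    IntegrableOn (stieltjesIntegrand p k z) (Ioi 0) :=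
  (((continuousOn_stieltjesIntegrand hz p k).locallyIntegrableOn measurableSet_Ici)
    |>.integrableOn_of_isBigO_atTop (isBigO_stieltjesIntegrand p k)
      ⟨Ioi 0, Ioi_mem_atTop 0, exp_neg_integrableOn_Ioi 0 (by norm_num)⟩).mono_set
    Ioi_subset_Ici_self

theorem hasDerivAt_stieltjesIntegrand (p : ℝ[X]) (k : ℕ) {t : ℝ} (ht : 0 ≤ t) :
    HasDerivAt (stieltjesIntegrand p (k + 1) z)
      (stieltjesIntegrand ((derivative - 1 : Module.End ℝ ℝ[X]) p) (k + 1) z t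
        - (k + 1) * stieltjesIntegrand p (k + 2) z t) t := by
  have hinv : HasDerivAt (fun t : ℝ => ((z + t) ^ (k + 1))⁻¹)
      (-(k + 1) * ((z + t) ^ (k + 2))⁻¹) t := by
    have hzt := hz t ht
    have h : HasDerivAt (fun w : ℂ => ((z + w) ^ (k + 1))⁻¹)
        (-((k + 1 : ℕ) * (z + t) ^ (k + 1 - 1) * 1) / ((z + t) ^ (k + 1)) ^ 2) (t : ℂ) :=
      (((hasDerivAt_id (t : ℂ)).const_add z).fun_pow (k + 1)).fun_inv (pow_ne_zero _ hzt)
    convert h.comp_ofReal using 1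
    field_simp
    push_cast
    ring
  have hG : stieltjesIntegrand p (k + 1) z =
      fun s => ((p.eval s * Real.exp (-s) : ℝ) : ℂ) * ((z + s) ^ (k + 1))⁻¹ := by
    funext s
    rw [stieltjesIntegrand, div_eq_mul_inv]
  rw [hG]
  refine ((p.hasDerivAt_eval_mul_exp_neg t).ofReal_comp.fun_mul hinv).congr_deriv ?_
  simp only [stieltjesIntegrand]
  field_simp
  ring

theorem integral_stieltjesIntegrand_derivative_sub_one {p : ℝ[X]} (hp : p.eval 0 = 0)
    (k : ℕ) :
    ∫ t in Ioi (0 : ℝ),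
        stieltjesIntegrand ((derivative - 1 : Module.End ℝ ℝ[X]) p) (k + 1) z t
      = (k + 1) * ∫ t in Ioi (0 : ℝ), stieltjesIntegrand p (k + 2) z t := by
  have hint₁ :=
    integrableOn_stieltjesIntegrand hz ((derivative - 1 : Module.End ℝ ℝ[X]) p) (k + 1)
  have hint₂ := (integrableOn_stieltjesIntegrand hz p (k + 2)).const_mul ((k : ℂ) + 1)
  have hFTC := integral_Ioi_of_hasDerivAt_of_tendsto'
    (fun t ht => hasDerivAt_stieltjesIntegrand hz p k ht) (hint₁.sub hint₂)
    (tendsto_stieltjesIntegrand_atTop p (k + 1))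
  rw [integral_sub hint₁ hint₂, integral_const_mul] at hFTC
  simpa [stieltjesIntegrand, hp, sub_eq_zero] using hFTC

theorem integral_stieltjesIntegrand_derivative_sub_one_pow {q : ℝ[X]} {m : ℕ}
    (hq : X ^ m ∣ q) :
    ∫ t in Ioi (0 : ℝ),
        stieltjesIntegrand (((derivative - 1 : Module.End ℝ ℝ[X]) ^ m) q) 1 z t
      = m ! * ∫ t in Ioi (0 : ℝ), stieltjesIntegrand q (m + 1) z t := by
  induction m generalizing q with
  | zero => simp
  | succ m ih =>
    have hq₀ : q.eval 0 = 0 := by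
      rw [← coeff_zero_eq_eval_zero, ← X_dvd_iff]
      exact (dvd_pow_self X m.succ_ne_zero).trans hq
    rw [pow_succ, Module.End.mul_apply, ih (X_pow_dvd_derivative_sub_one_apply hq),
      integral_stieltjesIntegrand_derivative_sub_one hz hq₀, factorial_succ]
    push_cast
    ring

end StieltjesIntegrand

theorem lagAlpha_one_eq_integral (n : ℕ) (a : ℂ) :
    lagAlpha n 1 a =
      ∫ t in Ioi (0 : ℝ), ((Real.exp (-t) * lagL n t : ℝ) : ℂ) / (2 * a + t) := by
  set f : ℝ → ℂ := fun t => ((Real.exp (-t) * lagL n t : ℝ) : ℂ) / (2 * a + t)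
  calc lagAlpha n 1 a = ∫ ξ in Ioi (0 : ℝ), 2 * f (2 * ξ) := by
        refine setIntegral_congr_fun measurableSet_Ioi fun ξ _ => ?_
        simp only [f, lagPhi]
        push_cast
        rw [show -(2 * (ξ : ℂ)) = -ξ + -ξ by ring, Complex.exp_add,
          show 2 * a + 2 * (ξ : ℂ) = 2 * (a + ξ) by ring, div_eq_mul_inv _ (2 * _), mul_inv]
        ring
    _ = ∫ t in Ioi (0 : ℝ), f t := by
        rw [integral_const_mul, integral_comp_mul_left_Ioi f 0 two_pos, mul_zero,
          Complex.real_smul]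
        push_cast
        ring

theorem lagAlpha_integral_formula (a : ℂ) (ha : ∀ x : ℝ, x ≤ 0 → a ≠ (x : ℂ)) (n : ℕ) :
    lagAlpha n 1 a
      = ∫ ξ in Ioi (0:ℝ), (ξ:ℂ) ^ n * Complex.exp (-(ξ:ℂ)) / (2 * a + (ξ:ℂ)) ^ (n + 1) := by
  have hz : ∀ t : ℝ, 0 ≤ t → 2 * a + t ≠ 0 := fun t ht h =>
    ha (-(t / 2)) (by linarith) (by push_cast; linear_combination h / 2)
  have hfac : (n ! : ℂ) ≠ 0 := Nat.cast_ne_zero.mpr n.factorial_ne_zero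
  calc lagAlpha n 1 a
      = ∫ t in Ioi (0 : ℝ), ((Real.exp (-t) * lagL n t : ℝ) : ℂ) / (2 * a + t) :=
        lagAlpha_one_eq_integral n a
    _ = (n ! : ℂ)⁻¹ * ∫ t in Ioi (0 : ℝ),
          stieltjesIntegrand (((derivative - 1 : Module.End ℝ ℝ[X]) ^ n) (X ^ n)) 1
            (2 * a) t := by
        rw [← integral_const_mul]
        refine setIntegral_congr_fun measurableSet_Ioi fun t _ => ?_
        rw [stieltjesIntegrand, eval_derivative_sub_one_pow_X_pow_eq_factorial_mul_lagL]
        push_cast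
        field_simp
    _ = ∫ t in Ioi (0 : ℝ), stieltjesIntegrand (X ^ n) (n + 1) (2 * a) t := by
        rw [integral_stieltjesIntegrand_derivative_sub_one_pow hz dvd_rfl,
          inv_mul_cancel_left₀ hfac]
    _ = _ := by
        refine setIntegral_congr_fun measurableSet_Ioi fun t _ => ?_
        simp only [stieltjesIntegrand, eval_pow, eval_X]
        push_cast
        ring
end
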